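/- For a cyclically ordered group G, the center of the Rieger unwound satisfies Z(uw(G)) = uw(Z(G)), and Z(uw(G))/\langle z_G \rangle is isomorphic to Z(G). -/

import Mathlib

/-- A cyclically ordered group: a ternary relation satisfying R1-R5. -/
def IsCyclicOrder {G : Type*} [Group G] (R : G → G → G → Prop) : Prop :=
  (∀ x y z : G, R x y z → x ≠ y ∧ y ≠ z ∧ z ≠ x) ∧
  (∀ x y z : G, x ≠ y → y ≠ z → z ≠ x → R x y z ∨ R x z y) ∧
  (∀ x y z : G, R x y z → R y z x) ∧
  (∀ x y z u : G, R x y z → R y u z → R x u z) ∧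
  (∀ x y z u v : G, R x y z → R (u * x * v) (u * y * v) (u * z * v))

open scoped Classical in
/-- The group law of the Rieger unwinding on `ℤ × G`:
`(k,g)·(m,h) = (k+m, g*h)` if `g = 1` or `h = 1` or `R 1 g (g*h)`,
`(k+m+1, g*h)` if `R 1 (g*h) g`, and `(k+m+1, 1)` if `g*h = 1 ≠ g`. -/
noncomputable def uwMul {G : Type*} [Group G] (R : G → G → G → Prop)
    (p q : ℤ × G) : ℤ × G :=
  if p.2 = 1 ∨ q.2 = 1 ∨ R 1 p.2 (p.2 * q.2) then (p.1 + q.1, p.2 * q.2)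
  else if R 1 (p.2 * q.2) p.2 then (p.1 + q.1 + 1, p.2 * q.2)
  else (p.1 + q.1 + 1, 1)

/-- The order of the Rieger unwinding on `ℤ × G`:
`(m,g) ≤ (m',g')` iff they are equal, or `m < m'`, or `m = m'` and (`R 1 g g'` or `g = 1`). -/
def uwLe {G : Type*} [Group G] (R : G → G → G → Prop) (p q : ℤ × G) : Prop :=
  p = q ∨ p.1 < q.1 ∨ (p.1 = q.1 ∧ (R 1 p.2 q.2 ∨ p.2 = 1))

/-! Write `a < b` for `R 1 a b`. The second coordinate of `uwMul` is the product in `G` (the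
last branch only occurs when `gh = 1`), so `(k, g)` is central in `uw(G)` iff `g` is central in
`G` and the carry bit of `(g, h)` equals that of `(h, g)` for every `h`. For commuting
`g, h ≠ 1` with `gh ≠ 1` this says `g < gh ↔ h < gh`: otherwise `g < gh < h`, say, and
translating by `g⁻¹`, `h⁻¹` and `(gh)⁻¹` yields the impossible cycle
`h < g⁻¹ < (gh)⁻¹ < h⁻¹ < g < h`. -/

namespace IsCyclicOrder

variable {G : Type*} [Group G] {R : G → G → G → Prop}

theorem rotate (hR : IsCyclicOrder R) {x y z : G} (h : R x y z) : R y z x :=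
  hR.2.2.1 x y z h

theorem mul_left (hR : IsCyclicOrder R) (u : G) {x y z : G} (h : R x y z) :
    R (u * x) (u * y) (u * z) := by
  simpa only [mul_one] using hR.2.2.2.2 x y z u 1 h

theorem trans_one (hR : IsCyclicOrder R) {a b c : G} (hab : R 1 a b) (hbc : R 1 b c) :
    R 1 a c :=
  hR.rotate (hR.rotate (hR.2.2.2.1 a b 1 c (hR.rotate hab) (hR.rotate hbc)))

theorem not_rel_one_self (hR : IsCyclicOrder R) (a : G) : ¬ R 1 a a :=
  fun h => (hR.1 1 a a h).2.1 rfl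

theorem not_rel_one_one (hR : IsCyclicOrder R) (a : G) : ¬ R 1 a 1 :=
  fun h => (hR.1 1 a 1 h).2.2 rfl

theorem rel_one_or_rel_one (hR : IsCyclicOrder R) {a b : G} (ha : a ≠ 1) (hb : b ≠ 1)
    (hab : a ≠ b) : R 1 a b ∨ R 1 b a :=
  hR.2.1 1 a b ha.symm hab hb

theorem rel_inv_mul_inv (hR : IsCyclicOrder R) {a b : G} (h : R 1 a b) :
    R 1 (a⁻¹ * b) a⁻¹ := by
  have := hR.mul_left a⁻¹ h
  rw [mul_one, inv_mul_cancel] at this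
  exact hR.rotate this

theorem rel_inv_inv_mul (hR : IsCyclicOrder R) {a b : G} (h : R 1 a b) :
    R 1 b⁻¹ (b⁻¹ * a) := by
  have := hR.mul_left b⁻¹ h
  rw [mul_one, inv_mul_cancel] at this
  exact hR.rotate (hR.rotate this)

theorem not_rel_mul_rel_of_commute (hR : IsCyclicOrder R) {g h : G} (hc : Commute g h)
    (hg : R 1 g (g * h)) (hh : R 1 (g * h) h) : False := by
  have h_lt_ginv : R 1 h g⁻¹ := by
    simpa only [inv_mul_cancel_left] using hR.rel_inv_mul_inv hg
  have ginv_lt_ghinv : R 1 g⁻¹ (g * h)⁻¹ := by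
    have e : (g * h)⁻¹ * h = g⁻¹ := by rw [hc.eq]; group
    simpa only [e] using hR.rel_inv_mul_inv hh
  have ghinv_lt_hinv : R 1 (g * h)⁻¹ h⁻¹ := by
    have e : (g * h)⁻¹ * g = h⁻¹ := by group
    simpa only [e] using hR.rel_inv_inv_mul hg
  have hinv_lt_g : R 1 h⁻¹ g := by
    have e : h⁻¹ * (g * h) = g := by rw [hc.eq]; group
    simpa only [e] using hR.rel_inv_inv_mul hh
  exact hR.not_rel_one_self h <| hR.trans_one h_lt_ginv <| hR.trans_one ginv_lt_ghinv <|
    hR.trans_one ghinv_lt_hinv <| hR.trans_one hinv_lt_g <| hR.trans_one hg hh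

theorem rel_mul_iff_of_commute (hR : IsCyclicOrder R) {g h : G} (hc : Commute g h)
    (hg : g ≠ 1) (hh : h ≠ 1) (hgh : g * h ≠ 1) :
    R 1 g (g * h) ↔ R 1 h (g * h) := by
  constructor
  · intro hlt
    refine (hR.rel_one_or_rel_one hh hgh fun e => hg ?_).resolve_right
      (hR.not_rel_mul_rel_of_commute hc hlt)
    simpa using e.symm
  · intro hlt
    rw [hc.eq] at hlt hgh ⊢
    refine (hR.rel_one_or_rel_one hg hgh fun e => hh ?_).resolve_right
      (hR.not_rel_mul_rel_of_commute hc.symm hlt)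
    simpa using e.symm

theorem carry_cond_comm (hR : IsCyclicOrder R) {g h : G} (hc : Commute g h) :
    (g = 1 ∨ h = 1 ∨ R 1 g (g * h)) ↔ (h = 1 ∨ g = 1 ∨ R 1 h (h * g)) := by
  rw [← hc.eq]
  by_cases hg : g = 1
  · simp [hg]
  by_cases hh : h = 1
  · simp [hh]
  by_cases hgh : g * h = 1
  · simp [hg, hh, hgh, hR.not_rel_one_one]
  · simp only [hg, hh, hR.rel_mul_iff_of_commute hc hg hh hgh, false_or]

end IsCyclicOrder

section Unwinding

variable {G : Type*} [Group G] {R : G → G → G → Prop}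

open scoped Classical

theorem uwMul_eq (hR : IsCyclicOrder R) (p q : ℤ × G) :
    uwMul R p q =
      (p.1 + q.1 + if p.2 = 1 ∨ q.2 = 1 ∨ R 1 p.2 (p.2 * q.2) then 0 else 1, p.2 * q.2) := by
  unfold uwMul
  split_ifs with hcarry hback
  · simp
  · rfl
  · simp only [not_or] at hcarry
    obtain ⟨hp, hq, hlt⟩ := hcarry
    refine Prod.ext rfl (of_not_not fun hpq => hback ?_)
    exact (hR.rel_one_or_rel_one hp (Ne.symm hpq) fun e => hq (by simpa using e)).resolve_left hlt

theorem uwMul_snd (hR : IsCyclicOrder R) (p q : ℤ × G) : (uwMul R p q).2 = p.2 * q.2 := by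
  rw [uwMul_eq hR]

theorem uwMul_comm_of_mem_center (hR : IsCyclicOrder R) {p : ℤ × G}
    (hp : p.2 ∈ Subgroup.center G) (q : ℤ × G) : uwMul R p q = uwMul R q p := by
  have hc : Commute p.2 q.2 := (Subgroup.mem_center_iff.mp hp q.2).symm
  rw [uwMul_eq hR, uwMul_eq hR, if_congr (hR.carry_cond_comm hc) rfl rfl, hc.eq, add_comm p.1]

theorem forall_uwMul_comm_iff_mem_center (hR : IsCyclicOrder R) (p : ℤ × G) :
    (∀ q : ℤ × G, uwMul R p q = uwMul R q p) ↔ p.2 ∈ Subgroup.center G := by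
  refine ⟨fun hp => Subgroup.mem_center_iff.mpr fun g => ?_, uwMul_comm_of_mem_center hR⟩
  simpa only [uwMul_snd hR] using (congrArg Prod.snd (hp (0, g))).symm

end Unwinding

/-- The center of the Rieger unwound is `uw(Z(G))`, and the second projection
realizes `Z(uw(G))/⟨z_G⟩ ≅ Z(G)`: it maps central elements of `uw(G)`
multiplicatively onto `Z(G)`, with kernel exactly `⟨z_G⟩ = ℤ × {1}`. -/
theorem uw_center {G : Type*} [Group G] (R : G → G → G → Prop)
    (hR : IsCyclicOrder R) :
    (∀ p : ℤ × G,
      (∀ q : ℤ × G, uwMul R p q = uwMul R q p) ↔ p.2 ∈ Subgroup.center G) ∧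
    (∀ p q : ℤ × G, p.2 ∈ Subgroup.center G → q.2 ∈ Subgroup.center G →
      (uwMul R p q).2 = p.2 * q.2) ∧
    (∀ g ∈ Subgroup.center G, ∃ p : ℤ × G,
      (∀ q : ℤ × G, uwMul R p q = uwMul R q p) ∧ p.2 = g) ∧
    (∀ p : ℤ × G, (∀ q : ℤ × G, uwMul R p q = uwMul R q p) →
      (p.2 = 1 ↔ ∃ n : ℤ, p = (n, (1 : G)))) := by
  refine ⟨forall_uwMul_comm_iff_mem_center hR, fun p q _ _ => uwMul_snd hR p q,
    fun g hg => ⟨(0, g), uwMul_comm_of_mem_center hR hg, rfl⟩,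
    fun p _ => ⟨fun h => ⟨p.1, Prod.ext rfl h⟩, by rintro ⟨n, rfl⟩; rfl⟩⟩
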